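/- Every instance of the axiom schemas Ax1–Ax7 is valid in every model satisfying the semantic constraints SC1–SC3, and the rules of inference R1–R3 preserve validity in such models (if all premises of a rule are valid in the model, then so is its conclusion). -/

import Mathlib

mutual
inductive SigTerm (Ag Pr : Type) (Op : ℕ → Type) : Type where
  | agent : Ag → SigTerm Ag Pr Op
  | op : (n : ℕ) → Op n → (Fin n → SigTerm Ag Pr Op) → SigTerm Ag Pr Op
  | ofFormula : SigFormula Ag Pr Op → SigTerm Ag Pr Op

inductive SigFormula (Ag Pr : Type) (Op : ℕ → Type) : Type where
  | atom : Pr → SigFormula Ag Pr Op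
  | neg : SigFormula Ag Pr Op → SigFormula Ag Pr Op
  | and : SigFormula Ag Pr Op → SigFormula Ag Pr Op → SigFormula Ag Pr Op
  | entails : SigTerm Ag Pr Op → SigFormula Ag Pr Op → SigFormula Ag Pr Op
  | signs : Ag → SigTerm Ag Pr Op → SigFormula Ag Pr Op
  | says : Ag → SigFormula Ag Pr Op → SigFormula Ag Pr Op
end

namespace SigFormula
variable {Ag Pr : Type} {Op : ℕ → Type}
/-- `φ → ψ` abbreviates `¬(φ ∧ ¬ψ)`. -/
def imp (φ ψ : SigFormula Ag Pr Op) : SigFormula Ag Pr Op := .neg (.and φ (.neg ψ))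
end SigFormula

structure SigModel (Ag Pr : Type) (Op : ℕ → Type) (W : Type) where
  Rsig : W → Ag → SigTerm Ag Pr Op → Prop
  Rent : SigTerm Ag Pr Op → W → Prop
  Rsays : W → Ag → W → Prop
  val : W → Pr → Prop

variable {Ag Pr : Type} {Op : ℕ → Type} {W : Type}

def Sat (M : SigModel Ag Pr Op W) : W → SigFormula Ag Pr Op → Prop
  | w, .atom p => M.val w p
  | w, .neg φ => ¬ Sat M w φ
  | w, .and φ ψ => Sat M w φ ∧ Sat M w ψ
  | w, .entails t φ => ∀ w' : W, M.Rent t w' → Sat M w' φ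
  | w, .signs A t => M.Rsig w A t
  | w, .says A φ => ∀ w' : W, M.Rsays w A w' → Sat M w' φ

def Valid (M : SigModel Ag Pr Op W) (φ : SigFormula Ag Pr Op) : Prop :=
  ∀ w : W, Sat M w φ

/-- SC1: for every formula `φ` and world `w`, `(φ,w) ∈ R_⊳` implies `M,w ⊨ φ`. -/
def SC1 (M : SigModel Ag Pr Op W) : Prop :=
  ∀ (φ : SigFormula Ag Pr Op) (w : W), M.Rent (.ofFormula φ) w → Sat M w φ

/-- SC2: `(w,A,t) ∈ R_sig` and `(w,A,w') ∈ R_says` imply `(t,w') ∈ R_⊳`. -/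
def SC2 (M : SigModel Ag Pr Op W) : Prop :=
  ∀ (w : W) (A : Ag) (t : SigTerm Ag Pr Op) (w' : W),
    M.Rsig w A t → M.Rsays w A w' → M.Rent t w'

/-- SC3: `(w,B,t) ∈ R_sig` and `(w,A,w') ∈ R_says` imply `(w',B,t) ∈ R_sig`. -/
def SC3 (M : SigModel Ag Pr Op W) : Prop :=
  ∀ (w : W) (A B : Ag) (t : SigTerm Ag Pr Op) (w' : W),
    M.Rsig w B t → M.Rsays w A w' → M.Rsig w' B t

/-- `φ` is a substitution instance of a propositional tautology: every
boolean valuation of formulas that respects `¬` and `∧` makes `φ` true. -/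
def IsTaut (φ : SigFormula Ag Pr Op) : Prop :=
  ∀ v : SigFormula Ag Pr Op → Bool,
    (∀ ψ, v (.neg ψ) = !(v ψ)) →
    (∀ ψ χ, v (.and ψ χ) = (v ψ && v χ)) →
    v φ = true

/-- Derivability in the signature logic. -/
inductive Deriv {Ag Pr : Type} {Op : ℕ → Type} : SigFormula Ag Pr Op → Prop where
  | ax1 {φ} : IsTaut φ → Deriv φ
  | ax2 (φ : SigFormula Ag Pr Op) : Deriv (.entails (.ofFormula φ) φ)
  | ax3 (t : SigTerm Ag Pr Op) (φ ψ) :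
      Deriv (((SigFormula.entails t φ).and (.entails t (φ.imp ψ))).imp (.entails t ψ))
  | ax4 (A : Ag) (t : SigTerm Ag Pr Op) (φ) :
      Deriv (((SigFormula.signs A t).and (.entails t φ)).imp (.says A φ))
  | ax5 (A : Ag) (φ ψ) :
      Deriv (((SigFormula.says A φ).and (.says A (φ.imp ψ))).imp (.says A ψ))
  | ax6 (A B : Ag) (t : SigTerm Ag Pr Op) :
      Deriv ((SigFormula.signs B t).imp (.says A (.signs B t)))
  | ax7 (A : Ag) (t : SigTerm Ag Pr Op) (φ) :
      Deriv ((SigFormula.entails t φ).imp (.says A (.entails t φ)))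
  | r1 {φ ψ} : Deriv φ → Deriv (φ.imp ψ) → Deriv ψ
  | r2 (t : SigTerm Ag Pr Op) {φ} : Deriv φ → Deriv (.entails t φ)
  | r3 (A : Ag) {φ} : Deriv φ → Deriv (.says A φ)

/-- The model obtained from `M` by replacing the entailment relation by `R`. -/
def SigModel.withEnt (M : SigModel Ag Pr Op W) (R : SigTerm Ag Pr Op → W → Prop) :
    SigModel Ag Pr Op W := { M with Rent := R }

/-- The semantic operator corresponding to `G says`, on sets of worlds. -/
def GSaysStep (M : SigModel Ag Pr Op W) (G : Finset Ag) (X : Set W) : Set W :=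
  {w | ∀ A ∈ G, ∀ w' : W, M.Rsays w A w' → w' ∈ X}

/-- The set of worlds of `M` where `G says^k φ` holds (`k ≥ 1`). -/
def GSaysK (M : SigModel Ag Pr Op W) (G : Finset Ag) (φ : SigFormula Ag Pr Op) (k : ℕ) : Set W :=
  (GSaysStep M G)^[k] {w | Sat M w φ}

/-- The set of worlds of `M` where `G saysᵂ φ` holds. -/
def GSaysOmega (M : SigModel Ag Pr Op W) (G : Finset Ag) (φ : SigFormula Ag Pr Op) : Set W :=
  {w | ∀ k ≥ 1, w ∈ GSaysK M G φ k}

mutual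
/-- Entailment depth of a term. -/
def SigTerm.depth : SigTerm Ag Pr Op → ℕ
  | .agent _ => 0
  | .op _ _ _ => 0
  | .ofFormula φ => φ.depth
/-- Entailment depth of a formula. -/
def SigFormula.depth : SigFormula Ag Pr Op → ℕ
  | .atom _ => 1
  | .neg φ => φ.depth
  | .and φ ψ => max φ.depth ψ.depth
  | .entails t φ => max t.depth φ.depth + 1
  | .signs _ _ => 1
  | .says _ φ => φ.depth
end

/-- `R ≡_k R'`: the relations agree on all terms of entailment depth at most `k`. -/
def EquivK (R R' : SigTerm Ag Pr Op → W → Prop) (k : ℕ) : Prop :=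
  ∀ (t : SigTerm Ag Pr Op) (w : W), t.depth ≤ k → (R t w ↔ R' t w)

/-- The sequence `R⁰ ⊆ R¹ ⊆ ⋯` of approximations to `R^ω`. -/
def RSeq (M : SigModel Ag Pr Op W) (R0 : SigTerm Ag Pr Op → W → Prop) :
    ℕ → SigTerm Ag Pr Op → W → Prop
  | 0 => R0
  | i + 1 => fun t w => RSeq M R0 i t w ∨
      ∃ φ : SigFormula Ag Pr Op, t = .ofFormula φ ∧ φ.depth = i + 1 ∧
        Sat (M.withEnt (RSeq M R0 i)) w φ

/-- The limit `R^ω = ⋃_i R^i`. -/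
def ROmega (M : SigModel Ag Pr Op W) (R0 : SigTerm Ag Pr Op → W → Prop) :
    SigTerm Ag Pr Op → W → Prop :=
  fun t w => ∃ i, RSeq M R0 i t w

namespace SigModel

variable (M : SigModel Ag Pr Op W)

theorem sat_imp {w : W} {φ ψ : SigFormula Ag Pr Op} :
    Sat M w (φ.imp ψ) ↔ (Sat M w φ → Sat M w ψ) := by
  simp only [SigFormula.imp, Sat, not_and, not_not]

open Classical in
/-- Truth at a fixed world is a boolean valuation respecting `¬` and `∧`, so every
tautology holds there. -/
theorem valid_of_isTaut {φ : SigFormula Ag Pr Op} (hφ : IsTaut φ) : Valid M φ := fun w => by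
  simpa using hφ (fun ψ => decide (Sat M w ψ))
    (fun ψ => by by_cases h : Sat M w ψ <;> simp [Sat, h])
    (fun ψ χ => by by_cases h : Sat M w ψ <;> simp [Sat, h])

theorem valid_entails_ofFormula (hM : SC1 M) (φ : SigFormula Ag Pr Op) :
    Valid M (.entails (.ofFormula φ) φ) :=
  fun _ => hM φ

theorem valid_entails_mp (t : SigTerm Ag Pr Op) (φ ψ : SigFormula Ag Pr Op) :
    Valid M (((SigFormula.entails t φ).and (.entails t (φ.imp ψ))).imp (.entails t ψ)) :=
  fun _ => (sat_imp M).2 fun ⟨hφ, himp⟩ w' hw' => (sat_imp M).1 (himp w' hw') (hφ w' hw')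

theorem valid_signs_and_entails_imp_says (hM : SC2 M) (A : Ag) (t : SigTerm Ag Pr Op)
    (φ : SigFormula Ag Pr Op) :
    Valid M (((SigFormula.signs A t).and (.entails t φ)).imp (.says A φ)) :=
  fun w => (sat_imp M).2 fun ⟨hsig, hent⟩ w' hw' => hent w' (hM w A t w' hsig hw')

theorem valid_says_mp (A : Ag) (φ ψ : SigFormula Ag Pr Op) :
    Valid M (((SigFormula.says A φ).and (.says A (φ.imp ψ))).imp (.says A ψ)) :=
  fun _ => (sat_imp M).2 fun ⟨hφ, himp⟩ w' hw' => (sat_imp M).1 (himp w' hw') (hφ w' hw')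

theorem valid_signs_imp_says_signs (hM : SC3 M) (A B : Ag) (t : SigTerm Ag Pr Op) :
    Valid M ((SigFormula.signs B t).imp (.says A (.signs B t))) :=
  fun w => (sat_imp M).2 fun hsig w' hw' => hM w A B t w' hsig hw'

/-- `R_⊳` does not depend on the world, so `t ⊳ φ` has the same truth value everywhere. -/
theorem valid_entails_imp_says_entails (A : Ag) (t : SigTerm Ag Pr Op)
    (φ : SigFormula Ag Pr Op) :
    Valid M ((SigFormula.entails t φ).imp (.says A (.entails t φ))) :=
  fun _ => (sat_imp M).2 fun hent _ _ => hent

end SigModel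

section

variable {M : SigModel Ag Pr Op W}

theorem Valid.mp {φ ψ : SigFormula Ag Pr Op} (hφ : Valid M φ) (himp : Valid M (φ.imp ψ)) :
    Valid M ψ :=
  fun w => (M.sat_imp).1 (himp w) (hφ w)

theorem Valid.entails {φ : SigFormula Ag Pr Op} (hφ : Valid M φ) (t : SigTerm Ag Pr Op) :
    Valid M (.entails t φ) :=
  fun _ w' _ => hφ w'

theorem Valid.says {φ : SigFormula Ag Pr Op} (hφ : Valid M φ) (A : Ag) :
    Valid M (.says A φ) :=
  fun _ w' _ => hφ w'

end

/-- Every instance of the axiom schemas Ax1–Ax7 is valid in every model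
satisfying SC1–SC3, and the rules of inference R1–R3 preserve validity in such models. -/
theorem axioms_valid_and_rules_preserve_validity
    (M : SigModel Ag Pr Op W) (h1 : SC1 M) (h2 : SC2 M) (h3 : SC3 M) :
    -- Ax1
    ((∀ φ : SigFormula Ag Pr Op, IsTaut φ → Valid M φ) ∧
    -- Ax2
     (∀ φ : SigFormula Ag Pr Op, Valid M (.entails (.ofFormula φ) φ)) ∧
    -- Ax3
     (∀ (t : SigTerm Ag Pr Op) (φ ψ : SigFormula Ag Pr Op),
        Valid M (((SigFormula.entails t φ).and (.entails t (φ.imp ψ))).imp (.entails t ψ))) ∧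
    -- Ax4
     (∀ (A : Ag) (t : SigTerm Ag Pr Op) (φ : SigFormula Ag Pr Op),
        Valid M (((SigFormula.signs A t).and (.entails t φ)).imp (.says A φ))) ∧
    -- Ax5
     (∀ (A : Ag) (φ ψ : SigFormula Ag Pr Op),
        Valid M (((SigFormula.says A φ).and (.says A (φ.imp ψ))).imp (.says A ψ))) ∧
    -- Ax6
     (∀ (A B : Ag) (t : SigTerm Ag Pr Op),
        Valid M ((SigFormula.signs B t).imp (.says A (.signs B t)))) ∧
    -- Ax7
     (∀ (A : Ag) (t : SigTerm Ag Pr Op) (φ : SigFormula Ag Pr Op),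
        Valid M ((SigFormula.entails t φ).imp (.says A (.entails t φ))))) ∧
    -- R1, R2, R3 preserve validity
    ((∀ φ ψ : SigFormula Ag Pr Op, Valid M φ → Valid M (φ.imp ψ) → Valid M ψ) ∧
     (∀ (t : SigTerm Ag Pr Op) (φ : SigFormula Ag Pr Op), Valid M φ → Valid M (.entails t φ)) ∧
     (∀ (A : Ag) (φ : SigFormula Ag Pr Op), Valid M φ → Valid M (.says A φ))) :=
  ⟨⟨fun _ => M.valid_of_isTaut, M.valid_entails_ofFormula h1, M.valid_entails_mp,
      M.valid_signs_and_entails_imp_says h2, M.valid_says_mp,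
      M.valid_signs_imp_says_signs h3, M.valid_entails_imp_says_entails⟩,
    fun _ _ => Valid.mp, fun t _ h => h.entails t, fun A _ h => h.says A⟩
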